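/- Let ⋆ be a differential star-product on ℝ^{2n} quantizing the standard symplectic structure, and let c = Σ_{k≥0} ℏ^k c_k be a Hochschild 2-cochain (each c_k a bidifferential operator, extended ℂ[[ℏ]]-bilinearly) with b̃c = 0, whose leading term is a bivector field: c_0(f,g) = Σ_{j,k} w^{jk} ∂_j f ∂_k g with smooth functions satisfying w^{jk} = −w^{kj}. Then c_0 is a 2-cocycle for the Poisson bracket: for all smooth f,g,h, {f, c_0(g,h)} + {g, c_0(h,f)} + {h, c_0(f,g)} = c_0({f,g}, h) + c_0({g,h}, f) + c_0({h,f}, g) (equivalently, the Schouten bracket [π, c_0] vanishes). -/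

import Mathlib

/-!  Common definitions: formal Weyl algebras, Moyal products, Weyl-bundle valued
differential forms on ℝ^{2n}, Fedosov connections, star-products on smooth functions,
multidifferential operators and Hochschild coboundaries.  -/

noncomputable section
namespace StarPaper

open scoped BigOperators

/-! ### Formal power series in y -/

/-- The fiber coefficient ring `ℂ[[y^1, …, y^N]]`. -/
abbrev Wc (N : ℕ) := MvPowerSeries (Fin N) ℂ

/-- Build a formal power series from its coefficient function. -/
def Wc.mk {N : ℕ} (f : (Fin N →₀ ℕ) → ℂ) : Wc N := f

/-- Formal partial derivative `∂/∂y^i` on `ℂ[[y]]`. -/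
def yD {N : ℕ} (i : Fin N) (a : Wc N) : Wc N :=
  Wc.mk fun β => ((β i : ℂ) + 1) * MvPowerSeries.coeff (R := ℂ) (β + Finsupp.single i 1) a

/-- Formal iterated partial derivative `∂^α` on `ℂ[[y]]`. -/
def yDM {N : ℕ} (α : Fin N →₀ ℕ) (a : Wc N) : Wc N :=
  Wc.mk fun β =>
    (∏ i : Fin N, (((β i + α i).factorial : ℂ) / ((β i).factorial : ℂ))) *
      MvPowerSeries.coeff (R := ℂ) (β + α) a

/-- Iterated derivatives along a tuple of directions. -/
def iterD {R : Type*} {N : ℕ} (D : Fin N → R → R) : {k : ℕ} → (Fin k → Fin N) → R → R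
  | 0, _, a => a
  | _ + 1, v, a => D (v 0) (iterD D (fun t => v t.succ) a)

/-- The `k`-th term of the Moyal–Weyl product for a constant matrix `π`:
`((-iℏ/2)^k/k!) Σ π^{i₁j₁}⋯π^{i_kj_k} (∂^k a/∂y^{i₁}⋯) (∂^k b/∂y^{j₁}⋯)`. -/
def moyalTerm {R : Type*} [CommRing R] [Module ℂ R] {N : ℕ}
    (D : Fin N → R → R) (π : Matrix (Fin N) (Fin N) ℂ) (k : ℕ) (a b : R) : R :=
  ((-Complex.I / 2) ^ k / (Nat.factorial k : ℂ)) •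
    ∑ i : Fin k → Fin N, ∑ j : Fin k → Fin N,
      (∏ t, π (i t) (j t)) • (iterD D i a * iterD D j b)

/-- Moyal product on formal power series `Σ_m ℏ^m F_m` (coefficients `F : ℕ → R`). -/
def moyalN {R : Type*} [CommRing R] [Module ℂ R] {N : ℕ} (D : Fin N → R → R)
    (π : Matrix (Fin N) (Fin N) ℂ) (F G : ℕ → R) : ℕ → R :=
  fun m => ∑ k ∈ Finset.range (m + 1), ∑ l ∈ Finset.range (m - k + 1),
    moyalTerm D π k (F l) (G (m - k - l))

/-- Moyal product on formal Laurent series `Σ_m ℏ^m F_m` (coefficients `F : ℤ → R`);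
the sum over contributions is finite for series bounded below in `ℏ`-degree. -/
def moyalZ {R : Type*} [CommRing R] [Module ℂ R] {N : ℕ} (D : Fin N → R → R)
    (π : Matrix (Fin N) (Fin N) ℂ) (F G : ℤ → R) : ℤ → R :=
  fun m => ∑ᶠ p : ℕ × ℤ, moyalTerm D π p.1 (F p.2) (G (m - p.1 - p.2))

/-- Moyal term for an `ℏ`-dependent matrix `π(ℏ) = π₀ + ℏπ₁`: the part of the `k`-th
Moyal term in which the product of matrix entries contributes `ℏ^d`. -/
def moyalTermH {R : Type*} [CommRing R] [Module ℂ R] {N : ℕ} (D : Fin N → R → R)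
    (π0 π1 : Matrix (Fin N) (Fin N) ℂ) (k d : ℕ) (a b : R) : R :=
  ((-Complex.I / 2) ^ k / (Nat.factorial k : ℂ)) •
    ∑ i : Fin k → Fin N, ∑ j : Fin k → Fin N,
      (∑ T ∈ Finset.univ.powerset.filter (fun T : Finset (Fin k) => T.card = d),
          (∏ t ∈ T, π1 (i t) (j t)) * ∏ t ∈ Tᶜ, π0 (i t) (j t)) •
        (iterD D i a * iterD D j b)

/-- Moyal product built from the `ℏ`-dependent matrix `π(ℏ) = π₀ + ℏπ₁`. -/
def moyalNH {R : Type*} [CommRing R] [Module ℂ R] {N : ℕ} (D : Fin N → R → R)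
    (π0 π1 : Matrix (Fin N) (Fin N) ℂ) (F G : ℕ → R) : ℕ → R :=
  fun m => ∑ k ∈ Finset.range (m + 1), ∑ d ∈ Finset.range (m - k + 1),
    ∑ l ∈ Finset.range (m - k - d + 1),
      moyalTermH D π0 π1 k d (F l) (G (m - k - d - l))

/-- The standard Poisson matrix `π` on `ℝ^{2n}` (inverse of the standard symplectic
matrix `ω`, normalized by `Σ_m ω_{jm} π^{mn} = δ_j^n`). -/
def stdPi (n : ℕ) : Matrix (Fin (2 * n)) (Fin (2 * n)) ℂ :=
  Matrix.of fun i j =>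
    if (i : ℕ) + n = (j : ℕ) then 1 else if (j : ℕ) + n = (i : ℕ) then -1 else 0

/-- The standard symplectic matrix `ω_{ij}`. -/
def stdOmega (n : ℕ) : Matrix (Fin (2 * n)) (Fin (2 * n)) ℂ := -stdPi n

/-! ### The formal Weyl algebra `W = ℂ[[y,ℏ]]` -/

/-- The formal Weyl algebra as `ℏ`-coefficient sequences. -/
abbrev Wa (N : ℕ) := ℕ → Wc N

/-- Moyal–Weyl product on `W` for a constant matrix `π`. -/
def wmulPi {N : ℕ} (π : Matrix (Fin N) (Fin N) ℂ) (a b : Wa N) : Wa N := moyalN yD π a b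

/-- Moyal–Weyl product on `W` for the standard symplectic Poisson matrix. -/
def wmul {n : ℕ} (a b : Wa (2 * n)) : Wa (2 * n) := wmulPi (stdPi n) a b

/-- The unit `1 ∈ W`. -/
def oneW (N : ℕ) : Wa N := fun m => if m = 0 then 1 else 0

/-- Scalar multiplication by a formal power series `s ∈ ℂ[[ℏ]]` (given by its
coefficients `s : ℕ → ℂ`). -/
def hsmul {N : ℕ} (s : ℕ → ℂ) (a : Wa N) : Wa N :=
  fun m => ∑ l ∈ Finset.range (m + 1), s l • a (m - l)

/-- The operator `E = -(i/2) Σ_j y^j ∂/∂y^j` on `ℂ[[y]]`. -/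
def EulW {N : ℕ} (a : Wc N) : Wc N :=
  Wc.mk fun β => -Complex.I / 2 * (∑ i : Fin N, (β i : ℂ)) * MvPowerSeries.coeff (R := ℂ) β a

/-- `E` on the Weyl algebra, acting on each `ℏ`-coefficient. -/
def EulWa {N : ℕ} (a : Wa N) : Wa N := fun m => EulW (a m)

/-- Termwise derivative `∂/∂ℏ`. -/
def hD {N : ℕ} (a : Wa N) : Wa N := fun m => (((m + 1 : ℕ) : ℂ)) • a (m + 1)

/-- Multiplication by `ℏ`. -/
def hM {N : ℕ} (a : Wa N) : Wa N := fun m => match m with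
  | 0 => 0
  | Nat.succ m' => a m'

/-- Division by `ℏ` (exact on elements divisible by `ℏ`; discards the constant term). -/
def hInv {N : ℕ} (a : Wa N) : Wa N := fun m => a (m + 1)

/-- The `ℏ`-derivative of the Moyal–Weyl product structure:
`c₁(a,b) = ∂(a⋆b)/∂ℏ − (∂a/∂ℏ)⋆b − a⋆(∂b/∂ℏ)`. -/
def c1W {n : ℕ} (a b : Wa (2 * n)) : Wa (2 * n) :=
  hD (wmul a b) - wmul (hD a) b - wmul a (hD b)

/-! ### W-valued differential forms on ℝ^{2n} -/

/-- Points of `ℝ^{2n}`. -/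
abbrev Pt (n : ℕ) := Fin (2 * n) → ℝ

/-- `W`-valued exterior forms on `ℝ^{2n}`: the component at a finite index set
`S = {j₁ < ⋯ < j_q}` is the coefficient of `dx^{j₁} ∧ ⋯ ∧ dx^{j_q}`. -/
abbrev WF (n : ℕ) := Finset (Fin (2 * n)) → Pt n → Wa (2 * n)

/-- Sign `(-1)^{#{j ∈ S, j < i}}` for inserting `dx^i` in front of `dx^S`. -/
def insSign {N : ℕ} (S : Finset (Fin N)) (i : Fin N) : ℂ :=
  (-1) ^ (S.filter fun j => j < i).card

/-- Koszul sign for merging `dx^{S₁} ∧ dx^{S₂}` into increasing order. -/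
def shuffleSign {N : ℕ} (S1 S2 : Finset (Fin N)) : ℂ :=
  (-1) ^ ((S1 ×ˢ S2).filter fun p => p.2 < p.1).card

/-- `∂/∂y^i` on the Weyl algebra. -/
def yDa {N : ℕ} (i : Fin N) (w : Wa N) : Wa N := fun m => yD i (w m)

/-- The operator `δ a = Σ_i dx^i ∧ ∂a/∂y^i`. -/
def deltaW {n : ℕ} (a : WF n) : WF n :=
  fun S x => ∑ i ∈ S, insSign S i • yDa i (a (S.erase i) x)

/-- The partial derivative `∂/∂x^i` of a `W`-valued function, taken coefficientwise. -/
def xD {n : ℕ} (i : Fin (2 * n)) (f : Pt n → Wa (2 * n)) (x : Pt n) : Wa (2 * n) :=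
  fun m => Wc.mk fun β =>
    fderiv ℝ (fun x' => MvPowerSeries.coeff (R := ℂ) β (f x' m)) x (Pi.single i 1)

/-- The exterior derivative `d a = Σ_i dx^i ∧ ∂a/∂x^i` on `W`-valued forms. -/
def extD {n : ℕ} (a : WF n) : WF n :=
  fun S x => ∑ i ∈ S, insSign S i • xD i (a (S.erase i)) x

/-- The product on `W`-valued forms: Moyal–Weyl product combined with wedge product. -/
def wMulF {n : ℕ} (a b : WF n) : WF n :=
  fun S x => ∑ S1 ∈ S.powerset, shuffleSign S1 (S \ S1) • wmul (a S1 x) (b (S \ S1) x)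

/-- Graded commutator `[r, a] = r⋆a − (−1)^{|a|} a⋆r` with a form `r` of degree 1. -/
def comm1 {n : ℕ} (r a : WF n) : WF n :=
  fun S x => wMulF r a S x - (-1 : ℂ) ^ (S.card - 1) • wMulF a r S x

/-- Graded commutator `[u, a] = u⋆a − a⋆u` with a form `u` of even degree. -/
def commE {n : ℕ} (u a : WF n) : WF n := fun S x => wMulF u a S x - wMulF a u S x

/-- The connection `D = −δ + d + (i/ℏ)[r, ·]` determined by a `W`-valued 1-form `r`. -/
def fedD {n : ℕ} (r a : WF n) : WF n :=
  fun S x => -deltaW a S x + extD a S x + Complex.I • hInv (comm1 r a S x)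

/-- A `W`-valued form has smooth coefficients. -/
def WF.Smooth {n : ℕ} (a : WF n) : Prop :=
  ∀ S m β, ContDiff ℝ (⊤ : ℕ∞) fun x => MvPowerSeries.coeff (R := ℂ) β (a S x m)

/-- A `W`-valued form is homogeneous of form-degree `q`. -/
def isForm {n : ℕ} (q : ℕ) (a : WF n) : Prop := ∀ S, S.card ≠ q → a S = 0

/-- A `W`-valued form is scalar: all coefficients are independent of the `y` variables. -/
def isScalar {n : ℕ} (a : WF n) : Prop :=
  ∀ S x m β, β ≠ 0 → MvPowerSeries.coeff (R := ℂ) β (a S x m) = 0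

/-- The constant standard symplectic 2-form `ω = (1/2) Σ ω_{ij} dx^i ∧ dx^j`. -/
def omegaF (n : ℕ) : WF n :=
  fun S _ m =>
    if m = 0 then
      MvPowerSeries.C (σ := Fin (2 * n)) (R := ℂ)
        (∑ i : Fin (2 * n), ∑ j : Fin (2 * n),
          if i < j ∧ S = {i, j} then stdOmega n i j else 0)
    else 0

/-- The curvature `Ω = ω + δr − dr − (i/ℏ) r⋆r` of the connection `−δ + d + (i/ℏ)[r,·]`. -/
def curv {n : ℕ} (r : WF n) : WF n :=
  fun S x => omegaF n S x + deltaW r S x - extD r S x - Complex.I • hInv (wMulF r r S x)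

/-- The operator `δ⁻¹`, acting as `(1/(p+q)) Σ_k y^k ι_k` on the part of `y`-degree `p`
and form-degree `q` (and as `0` for `p = q = 0`). -/
def deltaInv {n : ℕ} (a : WF n) : WF n :=
  fun S x m => Wc.mk fun β =>
    ((((β.sum fun _ e => e) + S.card : ℕ) : ℂ))⁻¹ *
      ∑ k : Fin (2 * n),
        if k ∉ S ∧ 1 ≤ β k then
          insSign S k * MvPowerSeries.coeff (R := ℂ) (β - Finsupp.single k 1) (a (insert k S) x m)
        else 0

/-! ### x-independent W-valued exterior forms (the graded algebra W⊗Λ) -/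

/-- `W`-valued exterior forms with constant coefficients. -/
abbrev WL (n : ℕ) := Finset (Fin (2 * n)) → Wa (2 * n)

/-- `δ` on `W ⊗ Λ`. -/
def deltaWL {n : ℕ} (a : WL n) : WL n :=
  fun S => ∑ i ∈ S, insSign S i • yDa i (a (S.erase i))

/-- Product (Moyal combined with wedge) on `W ⊗ Λ`. -/
def wMulL {n : ℕ} (a b : WL n) : WL n :=
  fun S => ∑ S1 ∈ S.powerset, shuffleSign S1 (S \ S1) • wmul (a S1) (b (S \ S1))

/-- `E` on `W ⊗ Λ`, acting on the `W`-coefficients. -/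
def EulL {n : ℕ} (a : WL n) : WL n := fun S => EulWa (a S)

/-- The `W`-valued 1-form `Σ_{i,j} ω_{ij} y^i dx^j`. -/
def oydxW (n : ℕ) : WL n :=
  fun S m =>
    if m = 0 then
      ∑ j : Fin (2 * n),
        (if S = {j} then ∑ i : Fin (2 * n), stdOmega n i j • MvPowerSeries.X i else 0)
    else 0

/-- The 1-form `K₀ = −(Er − iℏ ∂r/∂ℏ + i r + (i/2) Σ ω_{ij} y^i dx^j)`. -/
def K0 {n : ℕ} (r : WF n) : WF n :=
  fun S x =>
    -(EulWa (r S x) - Complex.I • hM (hD (r S x)) + Complex.I • r S x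
      + (Complex.I / 2) • oydxW n S)

/-- The quantum Liouville-type operator `ρ(u) = (ℏ/i) ∂u/∂ℏ + E u`. -/
def rhoW {n : ℕ} (u : WF n) : WF n :=
  fun S x m => (-Complex.I * (m : ℂ)) • u S x m + EulW (u S x m)

/-- `c₁` extended to `W`-valued forms. -/
def c1F {n : ℕ} (a b : WF n) : WF n :=
  fun S x => ∑ S1 ∈ S.powerset, shuffleSign S1 (S \ S1) • c1W (a S1 x) (b (S \ S1) x)

/-! ### The Laurent (ℏ-inverted) Weyl algebra and forms -/

/-- The extended Weyl algebra `W⁺ = ℂ[[y]][ℏ⁻¹,ℏ]]` as `ℏ`-coefficient sequences. -/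
abbrev WaZ (N : ℕ) := ℤ → Wc N

/-- Moyal–Weyl product on `W⁺` for a constant matrix `π`. -/
def wmulZPi {N : ℕ} (π : Matrix (Fin N) (Fin N) ℂ) (a b : WaZ N) : WaZ N := moyalZ yD π a b

/-- Moyal–Weyl product on `W⁺` for the standard symplectic Poisson matrix. -/
def wmulZ {n : ℕ} (a b : WaZ (2 * n)) : WaZ (2 * n) := wmulZPi (stdPi n) a b

/-- `W⁺`-valued exterior forms on `ℝ^{2n}`. -/
abbrev WFZ (n : ℕ) := Finset (Fin (2 * n)) → Pt n → WaZ (2 * n)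

/-- `∂/∂y^i` on `W⁺`. -/
def yDaZ {N : ℕ} (i : Fin N) (w : WaZ N) : WaZ N := fun m => yD i (w m)

/-- `δ` on `W⁺`-valued forms. -/
def deltaZ {n : ℕ} (a : WFZ n) : WFZ n :=
  fun S x => ∑ i ∈ S, insSign S i • yDaZ i (a (S.erase i) x)

/-- `∂/∂x^i` on `W⁺`-valued functions. -/
def xDZ {n : ℕ} (i : Fin (2 * n)) (f : Pt n → WaZ (2 * n)) (x : Pt n) : WaZ (2 * n) :=
  fun m => Wc.mk fun β =>
    fderiv ℝ (fun x' => MvPowerSeries.coeff (R := ℂ) β (f x' m)) x (Pi.single i 1)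

/-- Exterior derivative on `W⁺`-valued forms. -/
def extDZ {n : ℕ} (a : WFZ n) : WFZ n :=
  fun S x => ∑ i ∈ S, insSign S i • xDZ i (a (S.erase i)) x

/-- Product on `W⁺`-valued forms. -/
def wMulZF {n : ℕ} (a b : WFZ n) : WFZ n :=
  fun S x => ∑ S1 ∈ S.powerset, shuffleSign S1 (S \ S1) • wmulZ (a S1 x) (b (S \ S1) x)

/-- Graded commutator with a 1-form, on `W⁺`-valued forms. -/
def comm1Z {n : ℕ} (r a : WFZ n) : WFZ n :=
  fun S x => wMulZF r a S x - (-1 : ℂ) ^ (S.card - 1) • wMulZF a r S x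

/-- Division by `ℏ` on `W⁺` (exact: a shift of Laurent coefficients). -/
def shiftZ {N : ℕ} (a : WaZ N) : WaZ N := fun m => a (m + 1)

/-- The connection `D = −δ + d + (i/ℏ)[r,·]` on `W⁺`-valued forms. -/
def fedDZ {n : ℕ} (r a : WFZ n) : WFZ n :=
  fun S x => -deltaZ a S x + extDZ a S x + Complex.I • shiftZ (comm1Z r a S x)

/-- Termwise `∂/∂ℏ` on `W⁺`. -/
def hDZ {N : ℕ} (a : WaZ N) : WaZ N := fun m => ((m + 1 : ℤ) : ℂ) • a (m + 1)

/-- `∂/∂ℏ` on `W⁺`-valued forms. -/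
def hDZF {n : ℕ} (a : WFZ n) : WFZ n := fun S x => hDZ (a S x)

/-- `E` on `W⁺`. -/
def EulZ {N : ℕ} (a : WaZ N) : WaZ N := fun m => EulW (a m)

/-- `E` on `W⁺`-valued forms. -/
def EulZF {n : ℕ} (a : WFZ n) : WFZ n := fun S x => EulZ (a S x)

/-- `c₁` on `W⁺`. -/
def c1Za {n : ℕ} (a b : WaZ (2 * n)) : WaZ (2 * n) :=
  hDZ (wmulZ a b) - wmulZ (hDZ a) b - wmulZ a (hDZ b)

/-- `c₁` on `W⁺`-valued forms. -/
def c1ZF {n : ℕ} (a b : WFZ n) : WFZ n :=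
  fun S x => ∑ S1 ∈ S.powerset, shuffleSign S1 (S \ S1) • c1Za (a S1 x) (b (S \ S1) x)

/-- Smoothness of the coefficients of a `W⁺`-valued form. -/
def WFZ.Smooth {n : ℕ} (a : WFZ n) : Prop :=
  ∀ S m β, ContDiff ℝ (⊤ : ℕ∞) fun x => MvPowerSeries.coeff (R := ℂ) β (a S x m)

/-- Homogeneity of form-degree `q` for `W⁺`-valued forms. -/
def isFormZ {n : ℕ} (q : ℕ) (a : WFZ n) : Prop := ∀ S, S.card ≠ q → a S = 0

/-- A `W⁺`-valued form has power series coefficients (no negative powers of `ℏ`). -/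
def PSupp {n : ℕ} (a : WFZ n) : Prop := ∀ S x m, m < 0 → a S x m = 0

/-- A Laurent series is bounded below in `ℏ`-degree. -/
def BddZ {α : Type*} [Zero α] (f : ℤ → α) : Prop :=
  ∃ N : ℕ, ∀ m : ℤ, m < -(N : ℤ) → f m = 0

/-! ### Smooth functions and star-products on ℝ^N -/

/-- Complex-valued functions on `ℝ^N`. -/
abbrev SmFn (N : ℕ) := (Fin N → ℝ) → ℂ

/-- Partial derivative `∂/∂x^i` of a (smooth) function. -/
def xDf {N : ℕ} (i : Fin N) (f : SmFn N) : SmFn N := fun x => fderiv ℝ f x (Pi.single i 1)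

/-- Iterated partial derivative `∂^α`. -/
def xDfM {N : ℕ} (α : Fin N →₀ ℕ) (f : SmFn N) : SmFn N :=
  (List.finRange N).foldr (fun i g => (xDf i)^[α i] g) f

/-- Formal power series with function coefficients: `C^∞(ℝ^N,ℂ)[[ℏ]]`. -/
abbrev SmSer (N : ℕ) := ℕ → SmFn N

/-- Formal Laurent series with function coefficients: `C^∞(ℝ^N,ℂ)[ℏ⁻¹,ℏ]]`. -/
abbrev SmLau (N : ℕ) := ℤ → SmFn N

/-- All coefficients of a series are smooth. -/
def SmSer.Smooth {N : ℕ} (F : SmSer N) : Prop := ∀ m, ContDiff ℝ (⊤ : ℕ∞) (F m)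

/-- All coefficients of a Laurent series are smooth. -/
def SmLau.Smooth {N : ℕ} (F : SmLau N) : Prop := ∀ m, ContDiff ℝ (⊤ : ℕ∞) (F m)

/-- The Moyal star-product on `C^∞(ℝ^N,ℂ)[[ℏ]]` for a constant matrix `π`. -/
def fMul {N : ℕ} (π : Matrix (Fin N) (Fin N) ℂ) (F G : SmSer N) : SmSer N :=
  moyalN xDf π F G

/-- The Moyal star-product on Laurent series. -/
def fMulZ {N : ℕ} (π : Matrix (Fin N) (Fin N) ℂ) (F G : SmLau N) : SmLau N :=
  moyalZ xDf π F G

/-- The Moyal star-product with `ℏ`-dependent matrix `π(ℏ) = π₀ + ℏπ₁`. -/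
def fMulH {N : ℕ} (π0 π1 : Matrix (Fin N) (Fin N) ℂ) (F G : SmSer N) : SmSer N :=
  moyalNH xDf π0 π1 F G

/-- The constant series `1`. -/
def oneSer (N : ℕ) : SmSer N := fun m => if m = 0 then (fun _ => 1) else 0

/-- The standard Poisson bracket `{f,g} = Σ π^{ij} ∂_i f ∂_j g` on `ℝ^{2n}`. -/
def pb (n : ℕ) (f g : SmFn (2 * n)) : SmFn (2 * n) :=
  fun x => ∑ i, ∑ j, stdPi n i j * xDf i f x * xDf j g x

/-! ### Multidifferential operators and star-products -/

/-- A `k`-multidifferential operator on `C^∞(ℝ^N,ℂ)`: a finite sum of terms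
`u(x) (∂^{α₁}f₁)⋯(∂^{α_k}f_k)`, recorded by its finitely many coefficients. -/
abbrev MDOp (N k : ℕ) := (Fin k → (Fin N →₀ ℕ)) →₀ SmFn N

/-- Action of a multidifferential operator. -/
def MDOp.app {N k : ℕ} (c : MDOp N k) (f : Fin k → SmFn N) : SmFn N :=
  fun x => c.sum fun T u => u x * ∏ t, xDfM (T t) (f t) x

/-- A multidifferential operator has smooth coefficients. -/
def MDOp.Smooth {N k : ℕ} (c : MDOp N k) : Prop := ∀ T, ContDiff ℝ (⊤ : ℕ∞) (c T)

/-- A family of bidifferential operators `C_k`, extended `ℂ[[ℏ]]`-bilinearly: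
`F ⋆ G = Σ ℏ^{k+l+l'} C_k(F_l, G_{l'})`. -/
def starN {N : ℕ} (C : ℕ → MDOp N 2) (F G : SmSer N) : SmSer N :=
  fun m => ∑ k ∈ Finset.range (m + 1), ∑ l ∈ Finset.range (m - k + 1),
    MDOp.app (C k) ![F l, G (m - k - l)]

/-- The `ℂ[ℏ⁻¹,ℏ]]`-bilinear extension of a star-product to Laurent series. -/
def starZ {N : ℕ} (C : ℕ → MDOp N 2) (F G : SmLau N) : SmLau N :=
  fun m => ∑ᶠ p : ℕ × ℤ, MDOp.app (C p.1) ![F p.2, G (m - p.1 - p.2)]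

/-- Action of a Laurent cochain `c = Σ_l ℏ^l c_l` of multidifferential operators
on a `k`-tuple of Laurent series. -/
def lac {N k : ℕ} (cc : ℤ → MDOp N k) (u : Fin k → SmLau N) : SmLau N :=
  fun m => ∑ᶠ v : Fin k → ℤ, MDOp.app (cc (m - ∑ t, v t)) fun t => u t (v t)

/-- A differential star-product on `ℝ^{2n}` quantizing the standard symplectic
structure: `f ⋆ g = Σ ℏ^k C_k(f,g)` with `C_k` bidifferential, `C₀(f,g) = fg`,
`1` a unit, `⋆` associative, and `C₁(f,g) − C₁(g,f) = −i{f,g}`. -/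
structure DiffStar (n : ℕ) where
  C : ℕ → MDOp (2 * n) 2
  smooth : ∀ k, MDOp.Smooth (C k)
  C0 : ∀ f g : SmFn (2 * n), MDOp.app (C 0) ![f, g] = f * g
  unit_left : ∀ F : SmSer (2 * n), SmSer.Smooth F → starN C (oneSer (2 * n)) F = F
  unit_right : ∀ F : SmSer (2 * n), SmSer.Smooth F → starN C F (oneSer (2 * n)) = F
  assoc : ∀ F G H : SmSer (2 * n), SmSer.Smooth F → SmSer.Smooth G → SmSer.Smooth H →
    starN C (starN C F G) H = starN C F (starN C G H)
  C1skew : ∀ f g : SmFn (2 * n), ContDiff ℝ (⊤ : ℕ∞) f → ContDiff ℝ (⊤ : ℕ∞) g →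
    MDOp.app (C 1) ![f, g] - MDOp.app (C 1) ![g, f] = fun x => -Complex.I * pb n f g x

/-! ### Hochschild coboundary -/

/-- The Hochschild coboundary `b̃` of a `k`-cochain with respect to a product `mul`. -/
def hoch {A : Type*} [AddCommGroup A] (mul : A → A → A) {k : ℕ}
    (c : (Fin k → A) → A) : (Fin (k + 1) → A) → A :=
  fun u =>
    mul (u 0) (c fun t => u t.succ)
      + ∑ i : Fin k, ((-1 : ℤ) ^ ((i : ℕ) + 1)) •
          c (fun j => if (j : ℕ) < (i : ℕ) then u j.castSucc
            else if (j : ℕ) = (i : ℕ) then mul (u j.castSucc) (u j.succ)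
            else u j.succ)
      + ((-1 : ℤ) ^ (k + 1)) • mul (c fun t => u t.castSucc) (u (Fin.last k))

/-! ### Formal differential operators on ℂ[[y]] -/

/-- A formal `k`-differential operator on `ℂ[[y^1,…,y^N]]`:
`c(a₁,…,a_k) = Σ_T u^T (∂^{T 1}a₁)⋯(∂^{T k}a_k)` with coefficients
`u^T ∈ ℂ[[y]]` such that for each degree `d` only finitely many tuples `T` have a
coefficient containing a nonzero monomial of degree `≤ d`. -/
structure FDOp (N k : ℕ) where
  u : (Fin k → (Fin N →₀ ℕ)) → Wc N
  fin : ∀ d : ℕ,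
    {T : Fin k → (Fin N →₀ ℕ) | ∃ β : Fin N →₀ ℕ,
      (β.sum fun _ e => e) ≤ d ∧ MvPowerSeries.coeff (R := ℂ) β (u T) ≠ 0}.Finite

/-- Action of a formal differential operator (the defining sum converges in the
`y`-adic topology; each coefficient receives only finitely many contributions). -/
def FDOp.app {N k : ℕ} (P : FDOp N k) (a : Fin k → Wc N) : Wc N :=
  Wc.mk fun β => ∑ᶠ T : Fin k → (Fin N →₀ ℕ),
    MvPowerSeries.coeff (R := ℂ) β (P.u T * ∏ t, yDM (T t) (a t))

/-- Action of a Laurent cochain `c = Σ_l ℏ^l c_l` of formal differential operators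
on a `k`-tuple of elements of `W⁺`. -/
def flac {N k : ℕ} (cc : ℤ → FDOp N k) (a : Fin k → WaZ N) : WaZ N :=
  fun m => ∑ᶠ v : Fin k → ℤ, FDOp.app (cc (m - ∑ t, v t)) fun t => a t (v t)

/-! ### Flat sections, Taylor series and quantum exponential -/

/-- Fiberwise Taylor series of a smooth function at `x`. -/
def taylorW {N : ℕ} (f : SmFn N) (x : Fin N → ℝ) : Wc N :=
  Wc.mk fun β => (∏ i : Fin N, ((β i).factorial : ℂ))⁻¹ * xDfM β f x

/-- Sections of the Weyl bundle over `ℝ^{2n}` (W-valued 0-forms). -/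
abbrev Sect (n : ℕ) := Pt n → Wa (2 * n)

/-- The fiberwise Taylor lift of a series of smooth functions. -/
def taylorS {n : ℕ} (F : SmSer (2 * n)) : Sect n := fun x m => taylorW (F m) x

/-- A section has smooth coefficients. -/
def Sect.Smooth {n : ℕ} (u : Sect n) : Prop :=
  ∀ m β, ContDiff ℝ (⊤ : ℕ∞) fun x => MvPowerSeries.coeff (R := ℂ) β (u x m)

/-- A section is flat for `D = −δ + d`: its component equations read
`∂u/∂x^i = ∂u/∂y^i` for all `i`. -/
def Sect.Flat {n : ℕ} (u : Sect n) : Prop :=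
  ∀ (i : Fin (2 * n)) (x : Pt n), xD i u x = yDa i (u x)

/-- The symbol map `σ(u) = u|_{y=0}`. -/
def sigma {n : ℕ} (u : Sect n) : SmSer (2 * n) :=
  fun m x => MvPowerSeries.coeff (R := ℂ) 0 (u x m)

/-- Fiberwise Moyal–Weyl product of sections. -/
def wmulS {n : ℕ} (u v : Sect n) : Sect n := fun x => wmul (u x) (v x)

/-! ### Vector fields and Liouville-type operators -/

/-- Action of a vector field `X = Σ_j X^j ∂_j` on a function. -/
def XAct {N : ℕ} (X : Fin N → SmFn N) (f : SmFn N) : SmFn N :=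
  fun x => ∑ j, X j x * xDf j f x

/-- A smooth function viewed as a series concentrated in `ℏ`-degree `0`. -/
def embS {N : ℕ} (f : SmFn N) : SmSer N := fun m => if m = 0 then f else 0

/-- The Hochschild coboundary `b̃X(f,g) = f⋆(Xg) − X(f⋆g) + (Xf)⋆g` of a vector
field, for the Moyal star-product with constant matrix `π`. -/
def bXMoyal {N : ℕ} (π : Matrix (Fin N) (Fin N) ℂ) (X : Fin N → SmFn N)
    (f g : SmFn N) : SmSer N :=
  fMul π (embS f) (embS (XAct X g)) - (fun m => XAct X (fMul π (embS f) (embS g) m))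
    + fMul π (embS (XAct X f)) (embS g)

/-- The operator `ℏ ∂_ℏ + X` on `C^∞(ℝ^N,ℂ)[[ℏ]]`. -/
def LOp {N : ℕ} (X : Fin N → SmFn N) (F : SmSer N) : SmSer N :=
  fun m x => (m : ℂ) * F m x + XAct X (F m) x

/-- The derivative of a star-product with respect to `ℏ`:
`c(f,g) = Σ_{k≥1} k ℏ^{k-1} C_k(f,g)`, extended `ℂ[[ℏ]]`-bilinearly. -/
def dStar {N : ℕ} (C : ℕ → MDOp N 2) (F G : SmSer N) : SmSer N :=
  fun m => ∑ k ∈ Finset.Icc 1 (m + 1), (k : ℂ) •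
    ∑ l ∈ Finset.range (m + 1 - k + 1), MDOp.app (C k) ![F l, G (m + 1 - k - l)]

end StarPaper
namespace StarPaper

/-! The `ℏ¹`-coefficient of `b̃c = 0` on functions says that the Hochschild coboundary of `c₁`
for the pointwise product equals the Gerstenhaber bracket `C₁ ∘ c₀ + c₀ ∘ C₁`. Alternating
over the six permutations of the arguments kills every Hochschild coboundary of a commutative
product, while on the bracket it only sees the skew parts: `c₀` itself and
`C₁(f,g) − C₁(g,f) = −i{f,g}`. What remains is `2i` times
`{f, c₀(g,h)} + cyclic − c₀({f,g}, h) − cyclic`. -/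

section Derivatives

variable {N : ℕ}

lemma xDf_zero (i : Fin N) : xDf i (0 : SmFn N) = 0 := by
  funext x
  simp [xDf]

lemma xDf_neg (i : Fin N) (f : SmFn N) : xDf i (-f) = -xDf i f := by
  funext x
  simp [xDf, fderiv_neg]

lemma xDf_add_smul {v p : SmFn N} {x : Fin N → ℝ} (hv : DifferentiableAt ℝ v x)
    (hp : DifferentiableAt ℝ p x) (a : ℂ) (i : Fin N) :
    xDf i (v + a • p) x = xDf i v x + a * xDf i p x := by
  simp [xDf, fderiv_add hv (hp.const_smul a), fderiv_const_smul hp]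

lemma xDfM_zero (α : Fin N →₀ ℕ) : xDfM α (0 : SmFn N) = 0 := by
  unfold xDfM
  induction List.finRange N with
  | nil => rfl
  | cons i L ih => rw [List.foldr_cons, ih, Function.iterate_fixed (xDf_zero i)]

lemma xDfM_neg (α : Fin N →₀ ℕ) (f : SmFn N) : xDfM α (-f) = -xDfM α f := by
  unfold xDfM
  induction List.finRange N with
  | nil => rfl
  | cons i L ih =>
    rw [List.foldr_cons, ih, List.foldr_cons]
    exact Function.Commute.iterate_left (f := xDf i) (g := Neg.neg) (xDf_neg i) _ _

lemma contDiff_xDf {f : SmFn N} (hf : ContDiff ℝ (⊤ : ℕ∞) f) (i : Fin N) :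
    ContDiff ℝ (⊤ : ℕ∞) (xDf i f) :=
  (hf.fderiv_right (by simp)).clm_apply contDiff_const

lemma contDiff_xDfM (α : Fin N →₀ ℕ) {f : SmFn N} (hf : ContDiff ℝ (⊤ : ℕ∞) f) :
    ContDiff ℝ (⊤ : ℕ∞) (xDfM α f) := by
  unfold xDfM
  induction List.finRange N with
  | nil => exact hf
  | cons i L ih =>
    rw [List.foldr_cons]
    exact Function.Iterate.rec (fun g => ContDiff ℝ (⊤ : ℕ∞) g) ih
      (fun _ hg => contDiff_xDf hg i) (α i)

end Derivatives

lemma contDiff_pb {n : ℕ} {f g : SmFn (2 * n)} (hf : ContDiff ℝ (⊤ : ℕ∞) f)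
    (hg : ContDiff ℝ (⊤ : ℕ∞) g) : ContDiff ℝ (⊤ : ℕ∞) (pb n f g) :=
  ContDiff.sum fun i _ => ContDiff.sum fun j _ =>
    (contDiff_const.mul (contDiff_xDf hf i)).mul (contDiff_xDf hg j)

namespace MDOp

variable {N : ℕ}

def app₂ (c : MDOp N 2) (f g : SmFn N) : SmFn N := c.app ![f, g]

lemma app₂_eq_sum (c : MDOp N 2) (f g : SmFn N) (x : Fin N → ℝ) :
    c.app₂ f g x = ∑ T ∈ c.support, c T x * (xDfM (T 0) f x * xDfM (T 1) g x) := by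
  simp [app₂, MDOp.app, Finsupp.sum, Fin.prod_univ_two]

lemma app₂_zero_left (c : MDOp N 2) (g : SmFn N) : c.app₂ 0 g = 0 := by
  funext x
  simp [app₂_eq_sum, xDfM_zero]

lemma app₂_zero_right (c : MDOp N 2) (f : SmFn N) : c.app₂ f 0 = 0 := by
  funext x
  simp [app₂_eq_sum, xDfM_zero]

lemma app₂_neg_left (c : MDOp N 2) (f g : SmFn N) : c.app₂ (-f) g = -c.app₂ f g := by
  funext x
  simp [app₂_eq_sum, xDfM_neg, ← Finset.sum_neg_distrib]

lemma app₂_neg_right (c : MDOp N 2) (f g : SmFn N) : c.app₂ f (-g) = -c.app₂ f g := by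
  funext x
  simp [app₂_eq_sum, xDfM_neg, ← Finset.sum_neg_distrib]

lemma contDiff_app₂ {c : MDOp N 2} (hc : c.Smooth) {f g : SmFn N}
    (hf : ContDiff ℝ (⊤ : ℕ∞) f) (hg : ContDiff ℝ (⊤ : ℕ∞) g) :
    ContDiff ℝ (⊤ : ℕ∞) (c.app₂ f g) := by
  rw [show c.app₂ f g = _ from funext (app₂_eq_sum c f g)]
  exact ContDiff.sum fun T _ =>
    (hc T).mul ((contDiff_xDfM (T 0) hf).mul (contDiff_xDfM (T 1) hg))

end MDOp

def IsBivector {N : ℕ} (c : MDOp N 2) (w : Fin N → Fin N → SmFn N) : Prop :=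
  ∀ f g, c.app ![f, g] = fun x => ∑ j, ∑ k, w j k x * xDf j f x * xDf k g x

namespace IsBivector

variable {N : ℕ} {c : MDOp N 2} {w : Fin N → Fin N → SmFn N}

lemma app₂_swap (hc : IsBivector c w) (hw : ∀ j k, w k j = -w j k) (f g : SmFn N) :
    c.app₂ f g = -c.app₂ g f := by
  funext x
  simp only [MDOp.app₂, hc f g, hc g f, Pi.neg_apply, ← Finset.sum_neg_distrib]
  rw [Finset.sum_comm]
  refine Finset.sum_congr rfl fun j _ => Finset.sum_congr rfl fun k _ => ?_
  rw [hw j k, Pi.neg_apply]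
  ring

lemma app₂_add_smul_left (hc : IsBivector c w) {v p : SmFn N} (hv : Differentiable ℝ v)
    (hp : Differentiable ℝ p) (a : ℂ) (q : SmFn N) :
    c.app₂ (v + a • p) q = c.app₂ v q + a • c.app₂ p q := by
  funext x
  simp only [MDOp.app₂, hc _ q, Pi.add_apply, Pi.smul_apply, smul_eq_mul, Finset.mul_sum,
    ← Finset.sum_add_distrib, xDf_add_smul (hv x) (hp x)]
  refine Finset.sum_congr rfl fun j _ => Finset.sum_congr rfl fun k _ => ?_
  ring

end IsBivector

section StarCoefficients

variable {N : ℕ} (C : ℕ → MDOp N 2) (F G : SmSer N)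

lemma starN_zero : starN C F G 0 = (C 0).app₂ (F 0) (G 0) := by
  simp [starN, MDOp.app₂]

lemma starN_one :
    starN C F G 1 = (C 0).app₂ (F 0) (G 1) + (C 0).app₂ (F 1) (G 0) + (C 1).app₂ (F 0) (G 0) := by
  simp [starN, MDOp.app₂, Finset.sum_range_succ]

end StarCoefficients

lemma SmSer.smooth_embS {N : ℕ} {f : SmFn N} (hf : ContDiff ℝ (⊤ : ℕ∞) f) :
    SmSer.Smooth (embS f) := by
  intro m
  unfold embS
  split_ifs
  exacts [hf, contDiff_const]

section Cochains

variable {R : Type*}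

def alt3 [AddCommGroup R] (F : R → R → R → R) (u v p : R) : R :=
  F u v p - F v u p - F u p v - F p v u + F v p u + F p u v

def hochCoboundary [CommRing R] (c : R → R → R) (u v p : R) : R :=
  u * c v p - c (u * v) p + c u (v * p) - c u v * p

def gerstComp [AddCommGroup R] (B c : R → R → R) (u v p : R) : R :=
  B (c u v) p - B u (c v p)

lemma alt3_add [AddCommGroup R] (F G : R → R → R → R) (u v p : R) :
    alt3 (F + G) u v p = alt3 F u v p + alt3 G u v p := by
  simp only [alt3, Pi.add_apply]
  abel

lemma alt3_congr [AddCommGroup R] {P : R → Prop} {F G : R → R → R → R}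
    (hFG : ∀ a b c, P a → P b → P c → F a b c = G a b c) {u v p : R}
    (hu : P u) (hv : P v) (hp : P p) : alt3 F u v p = alt3 G u v p := by
  simp only [alt3, hFG _ _ _ hu hv hp, hFG _ _ _ hv hu hp, hFG _ _ _ hu hp hv,
    hFG _ _ _ hp hv hu, hFG _ _ _ hv hp hu, hFG _ _ _ hp hu hv]

lemma alt3_hochCoboundary [CommRing R] (c : R → R → R) (u v p : R) :
    alt3 (hochCoboundary c) u v p = 0 := by
  simp only [alt3, hochCoboundary]
  ring_nf

end Cochains

lemma hochCoboundary_eq_of_cocycle {N : ℕ} {C cc : ℕ → MDOp N 2}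
    (hC0 : ∀ f g : SmFn N, (C 0).app₂ f g = f * g) {u v p : SmFn N}
    (hcoc : starN C (embS u) (starN cc (embS v) (embS p))
        - starN cc (starN C (embS u) (embS v)) (embS p)
        + starN cc (embS u) (starN C (embS v) (embS p))
        - starN C (starN cc (embS u) (embS v)) (embS p) = 0) :
    hochCoboundary (cc 1).app₂ u v p =
      (gerstComp (C 1).app₂ (cc 0).app₂ + gerstComp (cc 0).app₂ (C 1).app₂) u v p := by
  have h1 := congrFun hcoc 1
  simp only [Pi.sub_apply, Pi.add_apply, Pi.zero_apply, starN_one, starN_zero, embS,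
    one_ne_zero, if_true, if_false, MDOp.app₂_zero_left, MDOp.app₂_zero_right, hC0,
    mul_zero, zero_mul, zero_add, add_zero] at h1
  simp only [hochCoboundary, gerstComp, Pi.add_apply]
  linear_combination h1

lemma DiffStar.app₂_one_eq_swap_add {n : ℕ} (St : DiffStar n) {f g : SmFn (2 * n)}
    (hf : ContDiff ℝ (⊤ : ℕ∞) f) (hg : ContDiff ℝ (⊤ : ℕ∞) g) :
    (St.C 1).app₂ f g = (St.C 1).app₂ g f + (-Complex.I) • pb n f g :=
  eq_add_of_sub_eq' (St.C1skew f g hf hg)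

section Alternation

variable {n : ℕ} (St : DiffStar n) {c : MDOp (2 * n) 2}
  {w : Fin (2 * n) → Fin (2 * n) → SmFn (2 * n)} {f g h : SmFn (2 * n)}

lemma alt3_gerstComp_C_one_bivector (hc : c.Smooth) (hbiv : IsBivector c w)
    (hw : ∀ j k, w k j = -w j k)
    (hf : ContDiff ℝ (⊤ : ℕ∞) f) (hg : ContDiff ℝ (⊤ : ℕ∞) g) (hh : ContDiff ℝ (⊤ : ℕ∞) h) :
    alt3 (gerstComp (St.C 1).app₂ c.app₂) f g h =
      (2 * Complex.I) • (pb n f (c.app₂ g h) + pb n g (c.app₂ h f) + pb n h (c.app₂ f g)) := by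
  have e1 := St.app₂_one_eq_swap_add hf (MDOp.contDiff_app₂ hc hg hh)
  have e2 := St.app₂_one_eq_swap_add hg (MDOp.contDiff_app₂ hc hh hf)
  have e3 := St.app₂_one_eq_swap_add hh (MDOp.contDiff_app₂ hc hf hg)
  simp only [alt3, gerstComp, hbiv.app₂_swap hw g f, hbiv.app₂_swap hw f h,
    hbiv.app₂_swap hw h g, MDOp.app₂_neg_left, MDOp.app₂_neg_right]
  linear_combination (norm := module) (-2 : ℂ) • (e1 + e2 + e3)

lemma alt3_gerstComp_bivector_C_one (hbiv : IsBivector c w) (hw : ∀ j k, w k j = -w j k)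
    (hf : ContDiff ℝ (⊤ : ℕ∞) f) (hg : ContDiff ℝ (⊤ : ℕ∞) g) (hh : ContDiff ℝ (⊤ : ℕ∞) h) :
    alt3 (gerstComp c.app₂ (St.C 1).app₂) f g h =
      (-2 * Complex.I) • (c.app₂ (pb n f g) h + c.app₂ (pb n g h) f + c.app₂ (pb n h f) g) := by
  have hlin : ∀ {a b : SmFn (2 * n)}, ContDiff ℝ (⊤ : ℕ∞) a → ContDiff ℝ (⊤ : ℕ∞) b → ∀ q,
      c.app₂ ((St.C 1).app₂ a b) q
        = c.app₂ ((St.C 1).app₂ b a) q + (-Complex.I) • c.app₂ (pb n a b) q := by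
    intro a b ha hb q
    rw [St.app₂_one_eq_swap_add ha hb, hbiv.app₂_add_smul_left
      ((MDOp.contDiff_app₂ (St.smooth 1) hb ha).differentiable (by simp))
      ((contDiff_pb ha hb).differentiable (by simp))]
  simp only [alt3, gerstComp, hbiv.app₂_swap hw _ ((St.C 1).app₂ _ _)]
  linear_combination (norm := module) (2 : ℂ) • (hlin hf hg h + hlin hg hh f + hlin hh hf g)

end Alternation

theorem leading_term_poisson_cocycle_general (n : ℕ) (St : DiffStar n)
    (cc : ℕ → MDOp (2 * n) 2) (hsm : ∀ k, MDOp.Smooth (cc k))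
    (w : Fin (2 * n) → Fin (2 * n) → SmFn (2 * n))
    (hskeww : ∀ j k, w k j = -w j k)
    (hc0 : ∀ f g : SmFn (2 * n),
      MDOp.app (cc 0) ![f, g] = fun x => ∑ j, ∑ k, w j k x * xDf j f x * xDf k g x)
    (hcoc : ∀ F G H : SmSer (2 * n), SmSer.Smooth F → SmSer.Smooth G → SmSer.Smooth H →
      starN St.C F (starN cc G H) - starN cc (starN St.C F G) H
        + starN cc F (starN St.C G H) - starN St.C (starN cc F G) H = 0) :
    ∀ f g h : SmFn (2 * n),
      ContDiff ℝ (⊤ : ℕ∞) f → ContDiff ℝ (⊤ : ℕ∞) g → ContDiff ℝ (⊤ : ℕ∞) h →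
      pb n f (MDOp.app (cc 0) ![g, h]) + pb n g (MDOp.app (cc 0) ![h, f])
          + pb n h (MDOp.app (cc 0) ![f, g]) =
        MDOp.app (cc 0) ![pb n f g, h] + MDOp.app (cc 0) ![pb n g h, f]
          + MDOp.app (cc 0) ![pb n h f, g] := by
  intro f g h hf hg hh
  have hbiv : IsBivector (cc 0) w := hc0
  have hcoeff : ∀ u v p : SmFn (2 * n), ContDiff ℝ (⊤ : ℕ∞) u → ContDiff ℝ (⊤ : ℕ∞) v →
      ContDiff ℝ (⊤ : ℕ∞) p → hochCoboundary (cc 1).app₂ u v p =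
        (gerstComp (St.C 1).app₂ (cc 0).app₂ + gerstComp (cc 0).app₂ (St.C 1).app₂) u v p :=
    fun u v p hu hv hp => hochCoboundary_eq_of_cocycle St.C0
      (hcoc _ _ _ (SmSer.smooth_embS hu) (SmSer.smooth_embS hv) (SmSer.smooth_embS hp))
  have halt := alt3_congr hcoeff hf hg hh
  rw [alt3_hochCoboundary, alt3_add,
    alt3_gerstComp_C_one_bivector St (hsm 0) hbiv hskeww hf hg hh,
    alt3_gerstComp_bivector_C_one St hbiv hskeww hf hg hh, neg_mul, neg_smul, ← sub_eq_add_neg,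
    ← smul_sub, eq_comm, smul_eq_zero] at halt
  exact sub_eq_zero.1 (halt.resolve_left (by simp))

/-- Let `⋆` be a differential star-product on `ℝ^{2n}` quantizing
the standard symplectic structure and let `c = Σ ℏ^k c_k` be a Hochschild 2-cocycle
of bidifferential operators whose leading term `c₀` is a bivector field
`c₀(f,g) = Σ w^{jk} ∂_j f ∂_k g` with `w^{jk} = −w^{kj}`.  Then `c₀` is a 2-cocycle
for the Poisson bracket. -/
theorem leading_term_poisson_cocycle (n : ℕ) (St : DiffStar n)
    (cc : ℕ → MDOp (2 * n) 2) (hsm : ∀ k, MDOp.Smooth (cc k))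
    (w : Fin (2 * n) → Fin (2 * n) → SmFn (2 * n))
    (hw : ∀ j k, ContDiff ℝ (⊤ : ℕ∞) (w j k)) (hskeww : ∀ j k, w k j = -w j k)
    (hc0 : ∀ f g : SmFn (2 * n),
      MDOp.app (cc 0) ![f, g] = fun x => ∑ j, ∑ k, w j k x * xDf j f x * xDf k g x)
    (hcoc : ∀ F G H : SmSer (2 * n), SmSer.Smooth F → SmSer.Smooth G → SmSer.Smooth H →
      starN St.C F (starN cc G H) - starN cc (starN St.C F G) H
        + starN cc F (starN St.C G H) - starN St.C (starN cc F G) H = 0) :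
    ∀ f g h : SmFn (2 * n),
      ContDiff ℝ (⊤ : ℕ∞) f → ContDiff ℝ (⊤ : ℕ∞) g → ContDiff ℝ (⊤ : ℕ∞) h →
      pb n f (MDOp.app (cc 0) ![g, h]) + pb n g (MDOp.app (cc 0) ![h, f])
          + pb n h (MDOp.app (cc 0) ![f, g]) =
        MDOp.app (cc 0) ![pb n f g, h] + MDOp.app (cc 0) ![pb n g h, f]
          + MDOp.app (cc 0) ![pb n h f, g] :=
  leading_term_poisson_cocycle_general n St cc hsm w hskeww hc0 hcoc

end StarPaper
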